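/- Let g: 𝒳 → 𝒴 be a piecewise bijective function with partition {𝒳_i}, let X have distribution P_X ≪ μ^N supported on 𝒳, Y = g(X). Then the information loss satisfies the ordered chain of bounds L(X→Y) ≤ ∫_𝒴 f_Y(y) log card(g^{-1}[{y}]) dy ≤ log( Σ_i ∫_{𝒴_i} f_Y(y) dy ) ≤ ess sup_{y∈𝒴} log card(g^{-1}[{y}]) ≤ log card({𝒳_i}), where card denotes cardinality and 𝒴_i = g(𝒳_i). -/

import Mathlib

open MeasureTheory ProbabilityTheory Filter Set
open scoped ENNReal NNReal Topology

noncomputable section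

/-- Base-2 entropy of the discrete (atomic) part of a measure. -/
def pmfEntropy {β : Type*} [MeasurableSpace β] (ν : Measure β) : ℝ≥0∞ :=
  ∑' b : β, ENNReal.ofReal (-((ν {b}).toReal * Real.logb 2 (ν {b}).toReal))

/-- Conditional entropy `H(X | Y)` (of a discretely supported `X`) given `Y`,
computed through the regular conditional distribution of `X` given `Y`. -/
def condEnt {α β γ : Type*} [MeasurableSpace α] [MeasurableSpace β] [StandardBorelSpace β]
    [Nonempty β] [MeasurableSpace γ] (μ : Measure α) [IsFiniteMeasure μ]
    (X : α → β) (Y : α → γ) : ℝ≥0∞ :=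
  ∫⁻ y, pmfEntropy (condDistrib X Y μ y) ∂(μ.map Y)

/-- Componentwise uniform quantization `X̂ₙ = ⌊2ⁿ X⌋ / 2ⁿ`. -/
def quant {ι : Type*} (n : ℕ) (x : ι → ℝ) : ι → ℝ :=
  fun i => (⌊(2 : ℝ) ^ n * x i⌋ : ℝ) / (2 : ℝ) ^ n

/-- `H(X̂ₙ)`, entropy of the quantized input. -/
def entQ {α ι : Type*} [MeasurableSpace α] [Fintype ι] (μ : Measure α)
    (X : α → ι → ℝ) (n : ℕ) : ℝ≥0∞ :=
  pmfEntropy (μ.map fun a => quant n (X a))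

/-- `H(X̂ₙ | Y)`. -/
def condEntQ {α ι γ : Type*} [MeasurableSpace α] [Fintype ι] [MeasurableSpace γ]
    (μ : Measure α) [IsFiniteMeasure μ] (X : α → ι → ℝ) (Y : α → γ) (n : ℕ) : ℝ≥0∞ :=
  condEnt μ (fun a => quant n (X a)) Y

/-- Information loss `L(X→Y) = H(X|Y) = limₙ H(X̂ₙ|Y)`; since the sequence
`H(X̂ₙ|Y)` is nondecreasing in `n` the limit equals the supremum. -/
def infoLoss {α ι γ : Type*} [MeasurableSpace α] [Fintype ι] [MeasurableSpace γ]
    (μ : Measure α) [IsFiniteMeasure μ] (X : α → ι → ℝ) (Y : α → γ) : ℝ≥0∞ :=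
  ⨆ n : ℕ, condEntQ μ X Y n

/-- The sequence `H(X̂ₙ|Y)/H(X̂ₙ)` whose limit is the relative information loss. -/
def relLossSeq {α ι γ : Type*} [MeasurableSpace α] [Fintype ι] [MeasurableSpace γ]
    (μ : Measure α) [IsFiniteMeasure μ] (X : α → ι → ℝ) (Y : α → γ) (n : ℕ) : ℝ :=
  (condEntQ μ X Y n).toReal / (entQ μ X n).toReal

/-- The sequence `I(X̂ₙ;Y)/H(X̂ₙ) = (H(X̂ₙ) - H(X̂ₙ|Y))/H(X̂ₙ)` whose limit is the
relative information transfer. -/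
def relTransSeq {α ι γ : Type*} [MeasurableSpace α] [Fintype ι] [MeasurableSpace γ]
    (μ : Measure α) [IsFiniteMeasure μ] (X : α → ι → ℝ) (Y : α → γ) (n : ℕ) : ℝ :=
  ((entQ μ X n).toReal - (condEntQ μ X Y n).toReal) / (entQ μ X n).toReal

/-- `H(ν̂ₙ)` for a measure on `ℝᴺ` (quantized entropy of a distribution). -/
def entQM {ι : Type*} [Fintype ι] (ν : Measure (ι → ℝ)) (n : ℕ) : ℝ≥0∞ :=
  pmfEntropy (ν.map (quant n))


/-- A **piecewise bijective function** (PBF) `g : 𝒳 → 𝒴`, `𝒳, 𝒴 ⊆ ℝᴺ`, w.r.t. an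
input distribution `ν`: there is a (countable) partition `{𝒳ᵢ}` of `𝒳 = s` into
measurable sets of positive `ν`-measure on each of which `g` is injective (hence a
bijection onto its image), the Jacobian `J` of `g` exists on the pieces, and
`det J ≠ 0` `ν`-a.s.  (Surjectivity onto `𝒴 = g(𝒳)` is automatic.) -/
structure IsPBF {ι I : Type*} [Fintype ι] [Countable I]
    (g : (ι → ℝ) → ι → ℝ) (s : Set (ι → ℝ)) (pieces : I → Set (ι → ℝ))
    (J : (ι → ℝ) → (ι → ℝ) →L[ℝ] (ι → ℝ)) (ν : Measure (ι → ℝ)) : Prop where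
  meas : Measurable g
  measSet : ∀ i, MeasurableSet (pieces i)
  disj : Pairwise (Function.onFun Disjoint pieces)
  cover : (⋃ i, pieces i) = s
  pos : ∀ i, 0 < ν (pieces i)
  injOn : ∀ i, Set.InjOn g (pieces i)
  deriv : ∀ i, ∀ x ∈ pieces i, HasFDerivWithinAt g (J x) (pieces i) x
  det_ne : ∀ᵐ x ∂ν, (J x).det ≠ 0

/-- Differential entropy (base 2) of a distribution `ν ≪ volume` on `ℝᴺ`:
`h(ν) = −∫ log₂ (dν/dλ) dν = −∫ f log₂ f dλ`. -/
def diffEnt {ι : Type*} [Fintype ι] (ν : Measure (ι → ℝ)) : ℝ :=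
  - ∫ x, Real.logb 2 ((ν.rnDeriv volume x).toReal) ∂ν

/-- Extended base-2 logarithm on `ℝ≥0∞` (with `log₂ ⊤ = ⊤`). -/
def elog2 (x : ℝ≥0∞) : ℝ≥0∞ :=
  if x = ⊤ then ⊤ else ENNReal.ofReal (Real.logb 2 x.toReal)

/-! Given `Y = y`, the input lies in the fibre `𝒳 ∩ g⁻¹{y}`, so every quantization `X̂ₙ` takes at
most `card(𝒳 ∩ g⁻¹{y})` values and, by maximality of the uniform entropy, has conditional
entropy at most `log₂ card(𝒳 ∩ g⁻¹{y})`. Since `g` is injective on each piece, the fibre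
cardinality is `Σᵢ 1_{𝒴ᵢ}`, whose mean is `Σᵢ P_Y(𝒴ᵢ)`; as the fibres are a.s. nonempty, Jensen's
inequality for the logarithm (on `[1, ∞]`) gives the second bound. The last two bounds hold
because `log₂` is monotone and a left adjoint, and each fibre meets each piece at most once. -/

def eexp2 (m : ℝ≥0∞) : ℝ≥0∞ :=
  if m = ⊤ then ⊤ else 2 ^ m.toReal

lemma elog2_top : elog2 ⊤ = ⊤ := if_pos rfl

lemma elog2_of_ne_top {x : ℝ≥0∞} (hx : x ≠ ⊤) :
    elog2 x = ENNReal.ofReal (Real.logb 2 x.toReal) := if_neg hx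

lemma gc_elog2_eexp2 : GaloisConnection elog2 eexp2 := by
  intro x m
  rcases eq_or_ne m ⊤ with rfl | hm
  · simp [eexp2]
  rcases eq_or_ne x ⊤ with rfl | hx
  · simp [elog2_top, eexp2, hm]
  rw [elog2_of_ne_top hx, eexp2, if_neg hm, ENNReal.ofReal_le_iff_le_toReal hm]
  rcases eq_or_ne x 0 with rfl | hx0
  · simp
  rw [Real.logb_le_iff_le_rpow one_lt_two (ENNReal.toReal_pos hx0 hx), ← ENNReal.ofReal_ofNat 2,
    ENNReal.ofReal_rpow_of_pos two_pos, ENNReal.le_ofReal_iff_toReal_le hx (by positivity)]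

lemma elog2_mono : Monotone elog2 := gc_elog2_eexp2.monotone_l

lemma elog2_lintegral_le_essSup {β : Type*} [MeasurableSpace β] {η : Measure β}
    [IsProbabilityMeasure η] (f : β → ℝ≥0∞) :
    elog2 (∫⁻ y, f y ∂η) ≤ essSup (fun y => elog2 (f y)) η := by
  refine (gc_elog2_eexp2 _ _).2 ?_
  calc ∫⁻ y, f y ∂η
      ≤ ∫⁻ _, eexp2 (essSup (fun y => elog2 (f y)) η) ∂η :=
        lintegral_mono_ae <| (ENNReal.ae_le_essSup _).mono fun _ hy => (gc_elog2_eexp2 _ _).1 hy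
    _ = eexp2 (essSup (fun y => elog2 (f y)) η) := by simp

lemma Real.logb_two_add_inv_log_two_le {a b : ℝ} (ha : 0 < a) (hb : 0 < b) :
    Real.logb 2 a + (Real.log 2)⁻¹ ≤ Real.logb 2 b + a * (b⁻¹ * (Real.log 2)⁻¹) := by
  have h := Real.log_le_sub_one_of_pos (div_pos ha hb)
  rw [Real.log_div ha.ne' hb.ne', div_eq_mul_inv] at h
  have hL : 0 ≤ (Real.log 2)⁻¹ := by positivity
  simp only [Real.logb, div_eq_mul_inv]
  nlinarith [mul_le_mul_of_nonneg_right h hL]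

/-- The tangent line of `log₂` at `c`, shifted by `1 / ln 2` so that both sides stay in
`ℝ≥0∞`. -/
lemma elog2_add_le_tangent {x c : ℝ≥0∞} (hx : 1 ≤ x) (hc : 1 ≤ c) (hc_top : c ≠ ⊤) :
    elog2 x + ENNReal.ofReal (Real.log 2)⁻¹ ≤
      elog2 c + x * (c⁻¹ * ENNReal.ofReal (Real.log 2)⁻¹) := by
  rcases eq_or_ne x ⊤ with rfl | hx_top
  · have hk : ENNReal.ofReal (Real.log 2)⁻¹ ≠ 0 := by simpa using Real.log_pos one_lt_two
    simp [ENNReal.top_mul, hk, hc_top]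
  have ha : 1 ≤ x.toReal := by simpa using ENNReal.toReal_mono hx_top hx
  have hb : 1 ≤ c.toReal := by simpa using ENNReal.toReal_mono hc_top hc
  rw [elog2_of_ne_top hx_top, elog2_of_ne_top hc_top, ← ENNReal.ofReal_toReal hx_top,
    ← ENNReal.ofReal_toReal hc_top, ← ENNReal.ofReal_inv_of_pos (by positivity),
    ← ENNReal.ofReal_mul (by positivity), ← ENNReal.ofReal_mul (by positivity),
    ← ENNReal.ofReal_add (Real.logb_nonneg one_lt_two (by simpa using ha)) (by positivity),
    ← ENNReal.ofReal_add (Real.logb_nonneg one_lt_two (by simpa using hb)) (by positivity)]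
  simp only [ENNReal.toReal_ofReal ENNReal.toReal_nonneg]
  exact ENNReal.ofReal_le_ofReal
    (Real.logb_two_add_inv_log_two_le (zero_lt_one.trans_le ha) (zero_lt_one.trans_le hb))

lemma lintegral_elog2_le_elog2_lintegral {β : Type*} [MeasurableSpace β] {η : Measure β}
    [IsProbabilityMeasure η] {f : β → ℝ≥0∞} (hf : ∀ᵐ y ∂η, 1 ≤ f y) :
    ∫⁻ y, elog2 (f y) ∂η ≤ elog2 (∫⁻ y, f y ∂η) := by
  set c := ∫⁻ y, f y ∂η
  rcases eq_or_ne c ⊤ with hc_top | hc_top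
  · simp [hc_top, elog2_top]
  have hc : 1 ≤ c := by simpa using lintegral_mono_ae hf
  set k := ENNReal.ofReal (Real.log 2)⁻¹
  have hslope : c⁻¹ * k ≠ ⊤ :=
    ENNReal.mul_ne_top (ENNReal.inv_ne_top.2 (zero_lt_one.trans_le hc).ne') ENNReal.ofReal_ne_top
  refine (ENNReal.add_le_add_iff_right (a := k) ENNReal.ofReal_ne_top).1 ?_
  calc ∫⁻ y, elog2 (f y) ∂η + k
      = ∫⁻ y, (elog2 (f y) + k) ∂η := by simp [lintegral_add_right _ measurable_const]
    _ ≤ ∫⁻ y, (elog2 c + f y * (c⁻¹ * k)) ∂η :=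
        lintegral_mono_ae <| hf.mono fun _ hy => elog2_add_le_tangent hy hc hc_top
    _ = elog2 c + c * (c⁻¹ * k) := by
        rw [lintegral_add_left measurable_const, lintegral_mul_const' _ _ hslope]
        simp [c]
    _ = elog2 c + k := by
        rw [← mul_assoc, ENNReal.mul_inv_cancel (zero_lt_one.trans_le hc).ne' hc_top, one_mul]

lemma Real.sum_negMulLog_le_log_card {β : Type*} (T : Finset β) {p : β → ℝ}
    (hp0 : ∀ b ∈ T, 0 ≤ p b) (hp1 : ∑ b ∈ T, p b = 1) :
    ∑ b ∈ T, Real.negMulLog (p b) ≤ Real.log T.card := by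
  set n : ℝ := (T.card : ℝ)
  have hn : 0 < n := by
    have hT : T.Nonempty := Finset.nonempty_of_sum_ne_zero (by rw [hp1]; exact one_ne_zero)
    exact Nat.cast_pos.2 hT.card_pos
  have hterm : ∀ b ∈ T, Real.negMulLog (p b) ≤ n⁻¹ - p b + p b * Real.log n := by
    intro b hb
    have h := Real.negMulLog_le_one_sub_self (mul_nonneg (hp0 b hb) hn.le)
    have hn_log : Real.negMulLog n = -n * Real.log n := rfl
    rw [Real.negMulLog_mul, hn_log] at h
    refine le_of_mul_le_mul_left ?_ hn
    rw [mul_add, mul_sub, mul_inv_cancel₀ hn.ne']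
    linarith
  calc ∑ b ∈ T, Real.negMulLog (p b)
      ≤ ∑ b ∈ T, (n⁻¹ - p b + p b * Real.log n) := Finset.sum_le_sum hterm
    _ = Real.log n := by
        rw [Finset.sum_add_distrib, Finset.sum_sub_distrib, ← Finset.sum_mul, hp1,
          Finset.sum_const, nsmul_eq_mul, mul_inv_cancel₀ hn.ne']
        ring

lemma pmfEntropy_le_elog2_encard {β : Type*} [MeasurableSpace β] [MeasurableSingletonClass β]
    (ν : Measure β) [IsProbabilityMeasure ν] {S : Set β} (hS : ∀ᵐ b ∂ν, b ∈ S) :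
    pmfEntropy ν ≤ elog2 S.encard := by
  obtain hinf | hfin := S.infinite_or_finite
  · simp [hinf.encard_eq, elog2_top]
  set T := hfin.toFinset
  set p : β → ℝ := fun b => (ν {b}).toReal
  have hterm : ∀ b, -(p b * Real.logb 2 (p b)) = Real.negMulLog (p b) / Real.log 2 := by
    intro b
    simp only [Real.negMulLog, Real.logb]
    ring
  have hoff : ∀ b ∉ T, ENNReal.ofReal (-(p b * Real.logb 2 (p b))) = 0 := by
    intro b hb
    have : ν {b} = 0 :=
      measure_mono_null (by simpa [T] using hb) (ae_iff.1 hS)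
    simp [p, this]
  have hp1 : ∑ b ∈ T, p b = 1 := by
    rw [← ENNReal.toReal_sum (fun b _ => measure_ne_top ν _), sum_measure_singleton,
      hfin.coe_toFinset, (prob_compl_eq_zero_iff hfin.measurableSet).1 hS, ENNReal.toReal_one]
  have hnonneg : ∀ b ∈ T, 0 ≤ -(p b * Real.logb 2 (p b)) := fun b _ => by
    rw [hterm]
    exact div_nonneg (Real.negMulLog_nonneg ENNReal.toReal_nonneg
      (ENNReal.toReal_le_of_le_ofReal zero_le_one (by simpa using prob_le_one)))
      (Real.log_nonneg one_le_two)
  rw [pmfEntropy, tsum_eq_sum hoff, ← ENNReal.ofReal_sum_of_nonneg hnonneg,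
    hfin.encard_eq_coe_toFinset_card, ENat.toENNReal_coe, elog2_of_ne_top (by simp),
    ENNReal.toReal_natCast, Finset.sum_congr rfl fun b _ => hterm b, ← Finset.sum_div]
  exact ENNReal.ofReal_le_ofReal (div_le_div_of_nonneg_right
    (Real.sum_negMulLog_le_log_card T (fun _ _ => ENNReal.toReal_nonneg) hp1)
    (Real.log_nonneg one_le_two))

lemma condEnt_le_lintegral_elog2_encard {α β γ : Type*} [MeasurableSpace α] [MeasurableSpace β]
    [StandardBorelSpace β] [Nonempty β] [MeasurableSpace γ]
    {μ : Measure α} [IsFiniteMeasure μ]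
    {Q : α → β} {Y : α → γ} (hQ : AEMeasurable Q μ) (hY : AEMeasurable Y μ)
    {F : Set (γ × β)} (hF : MeasurableSet F) (hYQ : ∀ᵐ a ∂μ, (Y a, Q a) ∈ F) :
    condEnt μ Q Y ≤ ∫⁻ y, elog2 (Prod.mk y ⁻¹' F).encard ∂(μ.map Y) := by
  have hF_ae : ∀ᵐ z ∂(μ.map Y ⊗ₘ condDistrib Q Y μ), z ∈ F := by
    rw [compProd_map_condDistrib hQ]
    exact (mem_ae_map_iff (hY.prodMk hQ) hF).2 hYQ
  exact lintegral_mono_ae <| (Measure.ae_ae_of_ae_compProd hF_ae).mono fun _ hy =>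
    pmfEntropy_le_elog2_encard _ hy

lemma condEnt_le_lintegral_elog2_encard_fiber {α β γ δ : Type*} [MeasurableSpace α]
    [MeasurableSpace β] [MeasurableSpace γ] [MeasurableSpace δ] [StandardBorelSpace δ]
    [Nonempty δ]
    {μ : Measure α} [IsFiniteMeasure μ] {X : α → β} (hX : AEMeasurable X μ)
    {g : β → γ} (hg : Measurable g) {q : β → δ} (hq : Measurable q) {s : Set β}
    (hs : MeasurableSet ((fun x => (g x, q x)) '' s)) (hXs : ∀ᵐ a ∂μ, X a ∈ s) :
    condEnt μ (fun a => q (X a)) (fun a => g (X a)) ≤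
      ∫⁻ y, elog2 (s ∩ g ⁻¹' {y}).encard ∂(μ.map fun a => g (X a)) := by
  refine (condEnt_le_lintegral_elog2_encard (hq.comp_aemeasurable hX) (hg.comp_aemeasurable hX) hs
    (hXs.mono fun a ha => mem_image_of_mem _ ha)).trans (lintegral_mono fun y => elog2_mono ?_)
  refine ENat.toENNReal_le.2 ((encard_le_encard ?_).trans (encard_image_le q _))
  rintro z ⟨x, hx, hxz⟩
  obtain ⟨rfl, rfl⟩ := Prod.mk.inj hxz
  exact ⟨x, ⟨hx, rfl⟩, rfl⟩

lemma measurable_quant {ι : Type*} (n : ℕ) : Measurable (quant (ι := ι) n) := by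
  unfold quant
  fun_prop

lemma infoLoss_le_lintegral_elog2_encard_fiber {α ι γ : Type*} [MeasurableSpace α] [Fintype ι]
    [MeasurableSpace γ] {μ : Measure α} [IsFiniteMeasure μ] {X : α → ι → ℝ}
    (hX : AEMeasurable X μ) {g : (ι → ℝ) → γ} (hg : Measurable g) {s : Set (ι → ℝ)}
    (hs : ∀ n, MeasurableSet ((fun x => (g x, quant n x)) '' s))
    (hXs : ∀ᵐ a ∂μ, X a ∈ s) :
    infoLoss μ X (fun a => g (X a)) ≤
      ∫⁻ y, elog2 (s ∩ g ⁻¹' {y}).encard ∂(μ.map fun a => g (X a)) :=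
  iSup_le fun n => condEnt_le_lintegral_elog2_encard_fiber hX hg (measurable_quant n) (hs n) hXs

lemma ae_one_le_encard_inter_preimage_singleton {α β γ : Type*} [MeasurableSpace α]
    [MeasurableSpace β] [MeasurableSpace γ] {μ : Measure α} {X : α → β}
    (hX : AEMeasurable X μ)
    {g : β → γ} (hg : Measurable g) {s : Set β} (hgs : MeasurableSet (g '' s))
    (hXs : ∀ᵐ a ∂μ, X a ∈ s) :
    ∀ᵐ y ∂(μ.map fun a => g (X a)), 1 ≤ (s ∩ g ⁻¹' {y}).encard := by
  filter_upwards [(mem_ae_map_iff (hg.comp_aemeasurable hX) hgs).2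
    (hXs.mono fun a ha => mem_image_of_mem g ha)] with y ⟨x, hx, hxy⟩
  exact one_le_encard_iff_nonempty.2 ⟨x, hx, hxy⟩

section Pieces

variable {β γ I : Type*} [Countable I] [MeasurableSpace β] [MeasurableSpace γ]
  {g : β → γ} {pieces : I → Set β}

lemma measurableSet_image_iUnion_of_injOn [StandardBorelSpace β]
    [MeasurableSpace.CountablySeparated γ] (hg : Measurable g)
    (hmeas : ∀ i, MeasurableSet (pieces i)) (hinj : ∀ i, InjOn g (pieces i)) :
    MeasurableSet (g '' ⋃ i, pieces i) := by
  rw [image_iUnion]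
  exact .iUnion fun i => (hmeas i).image_of_measurable_injOn hg (hinj i)

lemma encard_iUnion_inter_preimage_singleton [MeasurableSingletonClass γ] (hg : Measurable g)
    (hmeas : ∀ i, MeasurableSet (pieces i)) (hdisj : Pairwise (Function.onFun Disjoint pieces))
    (hinj : ∀ i, InjOn g (pieces i)) (y : γ) :
    (((⋃ i, pieces i) ∩ g ⁻¹' {y}).encard : ℝ≥0∞) =
      ∑' i, (g '' pieces i).indicator 1 y := by
  have hmeas_y : ∀ i, MeasurableSet (pieces i ∩ g ⁻¹' {y}) := fun i =>
    (hmeas i).inter (hg (measurableSet_singleton y))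
  rw [iUnion_inter, ← Measure.count_apply (.iUnion hmeas_y),
    measure_iUnion (fun i j hij => (hdisj hij).mono inter_subset_left inter_subset_left) hmeas_y]
  refine tsum_congr fun i => ?_
  rw [Measure.count_apply (hmeas_y i)]
  by_cases hy : y ∈ g '' pieces i
  · obtain ⟨x, hx, rfl⟩ := hy
    have hfiber : pieces i ∩ g ⁻¹' {g x} = {x} :=
      Subset.antisymm (fun x' hx' => hinj i hx'.1 hx hx'.2) (singleton_subset_iff.2 ⟨hx, rfl⟩)
    simp [hfiber, mem_image_of_mem g hx]
  · have hfiber : pieces i ∩ g ⁻¹' {y} = ∅ :=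
      eq_empty_of_forall_notMem fun x hx => hy ⟨x, hx.1, hx.2⟩
    simp [hfiber, hy]

lemma encard_iUnion_inter_preimage_singleton_le [MeasurableSingletonClass γ] (hg : Measurable g)
    (hmeas : ∀ i, MeasurableSet (pieces i)) (hdisj : Pairwise (Function.onFun Disjoint pieces))
    (hinj : ∀ i, InjOn g (pieces i)) (y : γ) :
    ((⋃ i, pieces i) ∩ g ⁻¹' {y}).encard ≤ ENat.card I := by
  rw [← ENat.toENNReal_le, encard_iUnion_inter_preimage_singleton hg hmeas hdisj hinj,
    ← ENNReal.tsum_one]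
  exact ENNReal.tsum_le_tsum fun i => indicator_le_self _ _ y

lemma lintegral_encard_iUnion_inter_preimage_singleton [StandardBorelSpace β]
    [MeasurableSingletonClass γ] [MeasurableSpace.CountablySeparated γ] (hg : Measurable g)
    (hmeas : ∀ i, MeasurableSet (pieces i)) (hdisj : Pairwise (Function.onFun Disjoint pieces))
    (hinj : ∀ i, InjOn g (pieces i))
    (η : Measure γ) :
    ∫⁻ y, (((⋃ i, pieces i) ∩ g ⁻¹' {y}).encard : ℝ≥0∞) ∂η =
      ∑' i, η (g '' pieces i) := by
  have himage : ∀ i, MeasurableSet (g '' pieces i) := fun i =>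
    (hmeas i).image_of_measurable_injOn hg (hinj i)
  simp_rw [encard_iUnion_inter_preimage_singleton hg hmeas hdisj hinj]
  rw [lintegral_tsum fun i => (measurable_one.indicator (himage i)).aemeasurable]
  simp [lintegral_indicator_one (himage _)]

end Pieces

theorem infoLoss_pbf_upper_bounds_general
    {α ι I : Type*} [MeasurableSpace α] [Fintype ι] [Countable I]
    (μ : Measure α) [IsProbabilityMeasure μ]
    (X : α → ι → ℝ) (hX : Measurable X)
    (g : (ι → ℝ) → ι → ℝ) (s : Set (ι → ℝ)) (pieces : I → Set (ι → ℝ))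
    (J : (ι → ℝ) → (ι → ℝ) →L[ℝ] (ι → ℝ))
    (hpbf : IsPBF g s pieces J (μ.map X))
    (hXs : ∀ a, X a ∈ s) :
    infoLoss μ X (fun a => g (X a)) ≤
        ∫⁻ y, elog2 ((s ∩ g ⁻¹' {y}).encard : ℝ≥0∞) ∂(μ.map fun a => g (X a)) ∧
    (∫⁻ y, elog2 ((s ∩ g ⁻¹' {y}).encard : ℝ≥0∞) ∂(μ.map fun a => g (X a))) ≤
        elog2 (∑' i : I, (μ.map fun a => g (X a)) (g '' pieces i)) ∧
    elog2 (∑' i : I, (μ.map fun a => g (X a)) (g '' pieces i)) ≤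
        essSup (fun y => elog2 ((s ∩ g ⁻¹' {y}).encard : ℝ≥0∞))
          (μ.map fun a => g (X a)) ∧
    essSup (fun y => elog2 ((s ∩ g ⁻¹' {y}).encard : ℝ≥0∞))
          (μ.map fun a => g (X a)) ≤
        elog2 ((Set.univ : Set I).encard : ℝ≥0∞) := by
  obtain ⟨hg, hmeas, hdisj, rfl, -, hinj, -, -⟩ := hpbf
  have : IsProbabilityMeasure (μ.map fun a => g (X a)) :=
    Measure.isProbabilityMeasure_map (hg.comp hX).aemeasurable
  have hmean := lintegral_encard_iUnion_inter_preimage_singleton hg hmeas hdisj hinj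
    (μ.map fun a => g (X a))
  refine ⟨?_, ?_, ?_, ?_⟩
  · refine infoLoss_le_lintegral_elog2_encard_fiber hX.aemeasurable hg (fun n => ?_)
      (ae_of_all _ hXs)
    exact measurableSet_image_iUnion_of_injOn (hg.prodMk (measurable_quant n)) hmeas
      fun i _ hx _ hx' hxx' => hinj i hx hx' (congrArg Prod.fst hxx')
  · rw [← hmean]
    refine lintegral_elog2_le_elog2_lintegral ?_
    filter_upwards [ae_one_le_encard_inter_preimage_singleton hX.aemeasurable hg
      (measurableSet_image_iUnion_of_injOn hg hmeas hinj) (ae_of_all _ hXs)] with y hy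
    exact_mod_cast hy
  · rw [← hmean]
    exact elog2_lintegral_le_essSup _
  · refine essSup_le_of_ae_le _ (ae_of_all _ fun y => elog2_mono ?_)
    rw [encard_univ]
    exact_mod_cast encard_iUnion_inter_preimage_singleton_le hg hmeas hdisj hinj y

/-- **Upper bounds on the information loss of a PBF** (ordered chain):
`L(X→Y) ≤ ∫ f_Y(y) log₂ card(g⁻¹[{y}]) dy ≤ log₂(Σᵢ ∫_{𝒴ᵢ} f_Y(y) dy)
 ≤ ess sup_y log₂ card(g⁻¹[{y}]) ≤ log₂ card({𝒳ᵢ})`, where `𝒴ᵢ = g(𝒳ᵢ)`. -/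
theorem infoLoss_pbf_upper_bounds
    {α ι I : Type*} [MeasurableSpace α] [Fintype ι] [Countable I]
    (μ : Measure α) [IsProbabilityMeasure μ]
    (X : α → ι → ℝ) (hX : Measurable X)
    (g : (ι → ℝ) → ι → ℝ) (s : Set (ι → ℝ)) (pieces : I → Set (ι → ℝ))
    (J : (ι → ℝ) → (ι → ℝ) →L[ℝ] (ι → ℝ))
    (hpbf : IsPBF g s pieces J (μ.map X))
    (hac : μ.map X ≪ (volume : Measure (ι → ℝ)))
    (hXs : ∀ a, X a ∈ s) :
    infoLoss μ X (fun a => g (X a)) ≤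
        ∫⁻ y, elog2 ((s ∩ g ⁻¹' {y}).encard : ℝ≥0∞) ∂(μ.map fun a => g (X a)) ∧
    (∫⁻ y, elog2 ((s ∩ g ⁻¹' {y}).encard : ℝ≥0∞) ∂(μ.map fun a => g (X a))) ≤
        elog2 (∑' i : I, (μ.map fun a => g (X a)) (g '' pieces i)) ∧
    elog2 (∑' i : I, (μ.map fun a => g (X a)) (g '' pieces i)) ≤
        essSup (fun y => elog2 ((s ∩ g ⁻¹' {y}).encard : ℝ≥0∞))
          (μ.map fun a => g (X a)) ∧
    essSup (fun y => elog2 ((s ∩ g ⁻¹' {y}).encard : ℝ≥0∞))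
          (μ.map fun a => g (X a)) ≤
        elog2 ((Set.univ : Set I).encard : ℝ≥0∞) :=
  infoLoss_pbf_upper_bounds_general μ X hX g s pieces J hpbf hXs
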